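/- arXiv:2107.09348 — 2 statements merged into one kernel-verified Lean document; each statement's English description precedes it below -/
import Mathlib

section
/- Let ψ : R \ {0} → C be smooth with all derivatives rapidly decreasing at infinity and having one-sided limits at 0, let c ≥ 0 be an integer, and suppose the jumps ⟨ψ⟩_0 = ⋯ = ⟨ψ^{(c-1)}⟩_0 = 0, where ⟨f⟩_0 = f(0+) - f(0-). Then |∫_{R\{0}} e^{-iyξ} ψ(ξ) dξ| ≤ min{1, |y|^{-c-1}} (|⟨ψ^{(c)}⟩_0| + ||ψ^{(c+1)}||_1 + ||ψ||_1) for all real y. -/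
open Complex MeasureTheory Set Filter

/-- The Harish-Chandra space `S(ℝ^×)`: smooth functions on `ℝ \ {0}` all of whose
derivatives are rapidly decreasing at infinity (and, in the statements below, admit
one-sided limits at `0` from both sides). -/
def SchwartzOnPunctured (ψ : ℝ → ℂ) : Prop :=
  ContDiffOn ℝ (⊤ : ℕ∞) ψ ({(0 : ℝ)}ᶜ) ∧
  (∀ n k : ℕ, ∃ C : ℝ, ∀ x : ℝ, 1 ≤ |x| → |x| ^ k * ‖iteratedDeriv n ψ x‖ ≤ C)

section Aux

lemma smooth_iter_aux {ψ : ℝ → ℂ} (h : ContDiffOn ℝ (⊤ : ℕ∞) ψ ({(0:ℝ)}ᶜ)) (n : ℕ) :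
    ContDiffOn ℝ (⊤ : ℕ∞) (iteratedDeriv n ψ) ({(0:ℝ)}ᶜ) := by
  induction n generalizing ψ with
  | zero => simpa using h
  | succ n ih =>
    rw [iteratedDeriv_succ']
    exact ih (h.deriv_of_isOpen isOpen_compl_singleton (by simp))

lemma hasDeriv_iter_aux {ψ : ℝ → ℂ} (h : ContDiffOn ℝ (⊤ : ℕ∞) ψ ({(0:ℝ)}ᶜ)) (n : ℕ) {x : ℝ}
    (hx : x ≠ 0) :
    HasDerivAt (iteratedDeriv n ψ) (iteratedDeriv (n+1) ψ x) x := by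
  have hmem : {(0:ℝ)}ᶜ ∈ nhds x := isOpen_compl_singleton.mem_nhds hx
  have hd : DifferentiableAt ℝ (iteratedDeriv n ψ) x :=
    ((smooth_iter_aux h n).contDiffAt hmem).differentiableAt (by simp)
  have := hd.hasDerivAt
  rwa [iteratedDeriv_succ]

lemma tendsto_atTop_zero_aux {ψ : ℝ → ℂ} (C : ℝ)
    (hC : ∀ x : ℝ, 1 ≤ |x| → |x| * ‖ψ x‖ ≤ C) :
    Tendsto ψ atTop (nhds 0) := by
  apply squeeze_zero_norm' (a := fun x => C / x)
  · filter_upwards [eventually_ge_atTop (1:ℝ)] with x hx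
    have h1 : (1:ℝ) ≤ |x| := by rw [abs_of_pos (by linarith)]; exact hx
    have := hC x h1
    rw [abs_of_pos (by linarith)] at this
    rw [le_div_iff₀ (by linarith)]
    linarith [this]
  · exact tendsto_const_nhds.div_atTop tendsto_id

lemma tendsto_atBot_zero_aux {ψ : ℝ → ℂ} (C : ℝ)
    (hC : ∀ x : ℝ, 1 ≤ |x| → |x| * ‖ψ x‖ ≤ C) :
    Tendsto ψ atBot (nhds 0) := by
  apply squeeze_zero_norm' (a := fun x => C / (-x))
  · filter_upwards [eventually_le_atBot (-1:ℝ)] with x hx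
    have h1 : (1:ℝ) ≤ |x| := by rw [abs_of_neg (by linarith)]; linarith
    have := hC x h1
    rw [abs_of_neg (by linarith)] at this
    rw [le_div_iff₀ (by linarith)]
    linarith [this]
  · exact tendsto_const_nhds.div_atTop (tendsto_neg_atBot_atTop)

lemma contOn_update_right_aux {g : ℝ → ℂ} {r : ℂ}
    (hg : ContinuousOn g ({(0:ℝ)}ᶜ))
    (hr : Tendsto g (nhdsWithin 0 (Set.Ioi 0)) (nhds r)) :
    ContinuousOn (Function.update g 0 r) (Icc (0:ℝ) 1) := by
  intro x hx
  rcases eq_or_ne x 0 with rfl | hx0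
  · have hsub : Icc (0:ℝ) 1 ⊆ insert 0 (Ioi 0) := by
      intro t ht
      rcases eq_or_lt_of_le ht.1 with h | h
      · exact Or.inl h.symm
      · exact Or.inr h
    apply (ContinuousWithinAt.mono · hsub)
    rw [ContinuousWithinAt, nhdsWithin_insert, Filter.tendsto_sup]
    constructor
    · simpa using tendsto_pure_nhds (Function.update g 0 _) 0
    · rw [Function.update_self]
      apply hr.congr'
      filter_upwards [self_mem_nhdsWithin] with t ht
      exact (Function.update_of_ne (ne_of_gt ht) _ _).symm
  · have hmem : {(0:ℝ)}ᶜ ∈ nhds x := isOpen_compl_singleton.mem_nhds hx0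
    have : ContinuousAt (Function.update g 0 r) x := by
      apply (hg.continuousAt hmem).congr
      filter_upwards [hmem] with t ht
      exact (Function.update_of_ne ht _ _).symm
    exact this.continuousWithinAt

lemma contOn_update_left_aux {g : ℝ → ℂ} {l : ℂ}
    (hg : ContinuousOn g ({(0:ℝ)}ᶜ))
    (hl : Tendsto g (nhdsWithin 0 (Set.Iio 0)) (nhds l)) :
    ContinuousOn (Function.update g 0 l) (Icc (-1:ℝ) 0) := by
  intro x hx
  rcases eq_or_ne x 0 with rfl | hx0
  · have hsub : Icc (-1:ℝ) 0 ⊆ insert 0 (Iio 0) := by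
      intro t ht
      rcases eq_or_lt_of_le ht.2 with h | h
      · exact Or.inl h
      · exact Or.inr h
    apply (ContinuousWithinAt.mono · hsub)
    rw [ContinuousWithinAt, nhdsWithin_insert, Filter.tendsto_sup]
    constructor
    · simpa using tendsto_pure_nhds (Function.update g 0 _) 0
    · rw [Function.update_self]
      apply hl.congr'
      filter_upwards [self_mem_nhdsWithin] with t ht
      exact (Function.update_of_ne (ne_of_lt ht) _ _).symm
  · have hmem : {(0:ℝ)}ᶜ ∈ nhds x := isOpen_compl_singleton.mem_nhds hx0
    have : ContinuousAt (Function.update g 0 l) x := by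
      apply (hg.continuousAt hmem).congr
      filter_upwards [hmem] with t ht
      exact (Function.update_of_ne ht _ _).symm
    exact this.continuousWithinAt

lemma integrableOn_Iio_of_neg_aux {f : ℝ → ℂ} {a : ℝ}
    (h : IntegrableOn (fun x => f (-x)) (Ioi (-a))) :
    IntegrableOn f (Iio a) := by
  have h1 : Integrable ((Ioi (-a)).indicator (fun x => f (-x))) :=
    (integrable_indicator_iff measurableSet_Ioi).mpr h
  have h2 := h1.comp_neg
  have h3 : (fun x => (Ioi (-a)).indicator (fun t => f (-t)) (-x)) = (Iio a).indicator f := by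
    funext x
    by_cases hx : x < a <;> simp [indicator, hx, neg_lt, lt_neg, not_lt.mpr, *]
  rw [h3] at h2
  exact (integrable_indicator_iff measurableSet_Iio).mp h2

lemma integrableOn_tail_aux {g : ℝ → ℂ} (hg : ContinuousOn g ({(0:ℝ)}ᶜ)) {C : ℝ}
    (hC : ∀ x : ℝ, 1 ≤ |x| → |x| ^ 2 * ‖g x‖ ≤ C) :
    IntegrableOn g (Ioi (1:ℝ)) := by
  have hmaj : IntegrableOn (fun x : ℝ => C * x ^ (-2 : ℝ)) (Ioi (1:ℝ)) :=
    (integrableOn_Ioi_rpow_of_lt (by norm_num) one_pos).const_mul C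
  apply hmaj.integrable.mono'
  · exact (hg.mono (fun x hx => ne_of_gt (lt_trans one_pos hx))).aestronglyMeasurable
      measurableSet_Ioi
  · rw [ae_restrict_iff' measurableSet_Ioi]
    filter_upwards with x hx
    have hx1 : (1:ℝ) < x := hx
    have habs : |x| = x := abs_of_pos (by linarith)
    have h2 := hC x (by rw [habs]; linarith)
    rw [habs] at h2
    have hx2 : (0:ℝ) < x ^ 2 := by positivity
    rw [Real.rpow_neg (by linarith), show ((2:ℝ)) = ((2:ℕ):ℝ) by norm_num,
      Real.rpow_natCast]
    rw [mul_comm C, inv_mul_eq_div, le_div_iff₀ hx2]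
    nlinarith [norm_nonneg (g x)]

lemma integrableOn_pos_aux {g : ℝ → ℂ} {r : ℂ} (hg : ContinuousOn g ({(0:ℝ)}ᶜ))
    (hr : Filter.Tendsto g (nhdsWithin 0 (Set.Ioi 0)) (nhds r)) {C : ℝ}
    (hC : ∀ x : ℝ, 1 ≤ |x| → |x| ^ 2 * ‖g x‖ ≤ C) :
    IntegrableOn g (Ioi (0:ℝ)) := by
  rw [show Ioi (0:ℝ) = Ioc 0 1 ∪ Ioi 1 from (Ioc_union_Ioi_eq_Ioi zero_le_one).symm]
  refine IntegrableOn.union ?_ (integrableOn_tail_aux hg hC)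
  have hicc : IntegrableOn (Function.update g 0 r) (Icc (0:ℝ) 1) :=
    (contOn_update_right_aux hg hr).integrableOn_Icc
  refine ((hicc.mono_set Ioc_subset_Icc_self).congr_fun ?_ measurableSet_Ioc)
  intro x hx
  exact (Function.update_of_ne (ne_of_gt hx.1) _ _)

lemma integrableOn_neg_aux {g : ℝ → ℂ} {l : ℂ} (hg : ContinuousOn g ({(0:ℝ)}ᶜ))
    (hl : Filter.Tendsto g (nhdsWithin 0 (Set.Iio 0)) (nhds l)) {C : ℝ}
    (hC : ∀ x : ℝ, 1 ≤ |x| → |x| ^ 2 * ‖g x‖ ≤ C) :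
    IntegrableOn g (Iio (0:ℝ)) := by
  rw [show Iio (0:ℝ) = Iio (-1) ∪ Ico (-1) 0 from ?_]
  · refine IntegrableOn.union ?_ ?_
    · apply integrableOn_Iio_of_neg_aux (a := -1)
      rw [neg_neg]
      apply integrableOn_tail_aux (g := fun x => g (-x))
      · exact hg.comp continuous_neg.continuousOn
          (fun x hx => by simpa using fun h => hx (by simpa using congrArg Neg.neg h))
      · intro x hx
        have : |(-x)| = |x| := abs_neg x
        exact this ▸ hC (-x) (this ▸ hx)
    · have hicc : IntegrableOn (Function.update g 0 l) (Icc (-1:ℝ) 0) :=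
        (contOn_update_left_aux hg hl).integrableOn_Icc
      refine ((hicc.mono_set Ico_subset_Icc_self).congr_fun ?_ measurableSet_Ico)
      intro x hx
      exact (Function.update_of_ne (ne_of_lt hx.2) _ _)
  · rw [Iio_union_Ico_eq_Iio (by norm_num)]

lemma norm_exp_Iyx_aux (y x : ℝ) : ‖Complex.exp (-(I * y * x))‖ = 1 := by
  rw [Complex.norm_exp]
  simp

lemma hasDerivAt_expIy_aux (y : ℝ) (x : ℝ) :
    HasDerivAt (fun t : ℝ => Complex.exp (-(I * y * t)))
      (Complex.exp (-(I * y * x)) * (-(I * y))) x := by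
  have h0 : (fun t : ℝ => Complex.exp (-(I * y * t))) =
      fun t : ℝ => Complex.exp ((-(I * y)) * t) := by
    funext t; ring_nf
  rw [h0]
  have h1 : HasDerivAt (fun t : ℝ => ((t : ℂ))) 1 x := (hasDerivAt_id x).ofReal_comp
  have h2 := (h1.const_mul (-(I * y))).cexp
  simpa [mul_comm] using h2

lemma ibp_pos_aux {g g' : ℝ → ℂ} {y : ℝ} {rn : ℂ}
    (hd : ∀ x : ℝ, x ≠ 0 → HasDerivAt g (g' x) x)
    (hr : Tendsto g (nhdsWithin 0 (Set.Ioi 0)) (nhds rn))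
    (htop : Tendsto g atTop (nhds 0))
    (hI1 : IntegrableOn (fun x : ℝ => Complex.exp (-(I * y * x)) * g' x) (Ioi 0))
    (hI0 : IntegrableOn (fun x : ℝ => Complex.exp (-(I * y * x)) * g x) (Ioi 0)) :
    (∫ x in Ioi (0:ℝ), Complex.exp (-(I * y * x)) * g' x)
      - I * y * ∫ x in Ioi (0:ℝ), Complex.exp (-(I * y * x)) * g x = -rn := by
  set f : ℝ → ℂ := fun x => Complex.exp (-(I * y * x)) * g x with hf
  set F : ℝ → ℂ := Function.update f 0 rn with hF
  set F' : ℝ → ℂ := fun x => Complex.exp (-(I * y * x)) * g' x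
      - I * y * (Complex.exp (-(I * y * x)) * g x) with hF'
  have hfF : ∀ x : ℝ, x ≠ 0 → F x = f x := fun x hx => Function.update_of_ne hx _ _
  have hF0 : F 0 = rn := Function.update_self _ _ _
  have hcont : ContinuousWithinAt F (Ici 0) 0 := by
    rw [← Set.Ioi_insert, ContinuousWithinAt, nhdsWithin_insert, Filter.tendsto_sup, hF0]
    constructor
    · simpa [hF0] using tendsto_pure_nhds F 0
    · have he : Tendsto (fun x : ℝ => Complex.exp (-(I * y * x))) (nhdsWithin 0 (Ioi 0))
          (nhds 1) := by
        have hc : Continuous (fun x : ℝ => Complex.exp (-(I * y * x))) := by fun_prop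
        have := (hc.tendsto 0).mono_left (nhdsWithin_le_nhds (s := Ioi 0))
        simpa using this
      have := he.mul hr
      rw [one_mul] at this
      apply this.congr'
      filter_upwards [self_mem_nhdsWithin] with t ht
      exact (hfF t (ne_of_gt ht)).symm
  have hderiv : ∀ x ∈ Ioi (0:ℝ), HasDerivAt F (F' x) x := by
    intro x hx
    have hx0 : x ≠ 0 := ne_of_gt hx
    have h1 : HasDerivAt f (F' x) x := by
      have := (hasDerivAt_expIy_aux y x).mul (hd x hx0)
      refine HasDerivAt.congr_deriv this ?_
      rw [hF']
      ring
    apply h1.congr_of_eventuallyEq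
    filter_upwards [isOpen_compl_singleton.mem_nhds hx0] with t ht
    exact hfF t ht
  have hFint : IntegrableOn F' (Ioi 0) := hI1.sub (hI0.const_mul (I * y))
  have hFtop : Tendsto F atTop (nhds 0) := by
    apply squeeze_zero_norm' (a := fun x => ‖g x‖)
    · filter_upwards [eventually_ne_atTop (0:ℝ)] with x hx
      rw [hfF x hx, hf, norm_mul, norm_exp_Iyx_aux, one_mul]
    · simpa using htop.norm
  have key := integral_Ioi_of_hasDerivAt_of_tendsto hcont hderiv hFint hFtop
  rw [hF0] at key
  rw [← integral_const_mul, ← integral_sub hI1 (hI0.const_mul (I * y))]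
  simpa using key

lemma ibp_neg_aux {g g' : ℝ → ℂ} {y : ℝ} {ln : ℂ}
    (hd : ∀ x : ℝ, x ≠ 0 → HasDerivAt g (g' x) x)
    (hl : Tendsto g (nhdsWithin 0 (Set.Iio 0)) (nhds ln))
    (hbot : Tendsto g atBot (nhds 0))
    (hI1 : IntegrableOn (fun x : ℝ => Complex.exp (-(I * y * x)) * g' x) (Iio 0))
    (hI0 : IntegrableOn (fun x : ℝ => Complex.exp (-(I * y * x)) * g x) (Iio 0)) :
    (∫ x in Iio (0:ℝ), Complex.exp (-(I * y * x)) * g' x)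
      - I * y * ∫ x in Iio (0:ℝ), Complex.exp (-(I * y * x)) * g x = ln := by
  set f : ℝ → ℂ := fun x => Complex.exp (-(I * y * x)) * g x with hf
  set F : ℝ → ℂ := Function.update f 0 ln with hF
  set F' : ℝ → ℂ := fun x => Complex.exp (-(I * y * x)) * g' x
      - I * y * (Complex.exp (-(I * y * x)) * g x) with hF'
  have hfF : ∀ x : ℝ, x ≠ 0 → F x = f x := fun x hx => Function.update_of_ne hx _ _
  have hF0 : F 0 = ln := Function.update_self _ _ _
  have hcont : ContinuousWithinAt F (Iic 0) 0 := by
    rw [← Set.Iio_insert, ContinuousWithinAt, nhdsWithin_insert, Filter.tendsto_sup, hF0]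
    constructor
    · simpa [hF0] using tendsto_pure_nhds F 0
    · have he : Tendsto (fun x : ℝ => Complex.exp (-(I * y * x))) (nhdsWithin 0 (Iio 0))
          (nhds 1) := by
        have hc : Continuous (fun x : ℝ => Complex.exp (-(I * y * x))) := by fun_prop
        have := (hc.tendsto 0).mono_left (nhdsWithin_le_nhds (s := Iio 0))
        simpa using this
      have := he.mul hl
      rw [one_mul] at this
      apply this.congr'
      filter_upwards [self_mem_nhdsWithin] with t ht
      exact (hfF t (ne_of_lt ht)).symm
  have hderiv : ∀ x ∈ Iio (0:ℝ), HasDerivAt F (F' x) x := by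
    intro x hx
    have hx0 : x ≠ 0 := ne_of_lt hx
    have h1 : HasDerivAt f (F' x) x := by
      have := (hasDerivAt_expIy_aux y x).mul (hd x hx0)
      refine HasDerivAt.congr_deriv this ?_
      rw [hF']
      ring
    apply h1.congr_of_eventuallyEq
    filter_upwards [isOpen_compl_singleton.mem_nhds hx0] with t ht
    exact hfF t ht
  have hFint : IntegrableOn F' (Iic 0) := by
    rw [integrableOn_Iic_iff_integrableOn_Iio]
    exact hI1.sub (hI0.const_mul (I * y))
  have hFbot : Tendsto F atBot (nhds 0) := by
    apply squeeze_zero_norm' (a := fun x => ‖g x‖)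
    · filter_upwards [eventually_ne_atBot (0:ℝ)] with x hx
      rw [hfF x hx, hf, norm_mul, norm_exp_Iyx_aux, one_mul]
    · simpa using hbot.norm
  have key := integral_Iic_of_hasDerivAt_of_tendsto hcont hderiv hFint hFbot
  rw [hF0, integral_Iic_eq_integral_Iio] at key
  rw [← integral_const_mul, ← integral_sub hI1 (hI0.const_mul (I * y))]
  simpa using key

end Aux

/-- If `ψ ∈ S(ℝ^×)` has one-sided limits `R n`, `L n` of all derivatives at `0` and the
jumps `⟨ψ⟩₀ = ⋯ = ⟨ψ^{(c-1)}⟩₀ = 0` vanish, then for all real `y`: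
`|∫_{ℝ∖{0}} e^{-iyξ} ψ(ξ) dξ| ≤ min{1, |y|^{-c-1}} (|⟨ψ^{(c)}⟩₀| + ‖ψ^{(c+1)}‖₁ + ‖ψ‖₁)`. -/
theorem stmt_10 (ψ : ℝ → ℂ) (hψ : SchwartzOnPunctured ψ) (c : ℕ)
    (R L : ℕ → ℂ)
    (hR : ∀ n, Filter.Tendsto (iteratedDeriv n ψ) (nhdsWithin 0 (Set.Ioi 0)) (nhds (R n)))
    (hL : ∀ n, Filter.Tendsto (iteratedDeriv n ψ) (nhdsWithin 0 (Set.Iio 0)) (nhds (L n)))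
    (hjump : ∀ j < c, R j = L j) (y : ℝ) :
    (‖∫ ξ in {(0 : ℝ)}ᶜ, Complex.exp (-(I * y * ξ)) * ψ ξ‖ ≤
      ‖R c - L c‖ + (∫ ξ in {(0 : ℝ)}ᶜ, ‖iteratedDeriv (c + 1) ψ ξ‖) +
        ∫ ξ in {(0 : ℝ)}ᶜ, ‖ψ ξ‖) ∧
    (y ≠ 0 →
      ‖∫ ξ in {(0 : ℝ)}ᶜ, Complex.exp (-(I * y * ξ)) * ψ ξ‖ ≤
        |y| ^ (-(c : ℤ) - 1) *
          (‖R c - L c‖ + (∫ ξ in {(0 : ℝ)}ᶜ, ‖iteratedDeriv (c + 1) ψ ξ‖) +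
            ∫ ξ in {(0 : ℝ)}ᶜ, ‖ψ ξ‖)) := by
  obtain ⟨hsm, hdec⟩ := hψ
  have hcontOn : ∀ n, ContinuousOn (iteratedDeriv n ψ) ({(0:ℝ)}ᶜ) :=
    fun n => (smooth_iter_aux hsm n).continuousOn
  -- integrability of the iterated derivatives
  have hIpos : ∀ n, IntegrableOn (iteratedDeriv n ψ) (Ioi (0:ℝ)) := by
    intro n
    obtain ⟨C, hC⟩ := hdec n 2
    exact integrableOn_pos_aux (hcontOn n) (hR n) hC
  have hIneg : ∀ n, IntegrableOn (iteratedDeriv n ψ) (Iio (0:ℝ)) := by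
    intro n
    obtain ⟨C, hC⟩ := hdec n 2
    exact integrableOn_neg_aux (hcontOn n) (hL n) hC
  -- integrability with the exponential factor
  have hexpC : Continuous (fun x : ℝ => Complex.exp (-(I * y * x))) := by fun_prop
  have hEI : ∀ (n : ℕ) (s : Set ℝ), IntegrableOn (iteratedDeriv n ψ) s →
      IntegrableOn (fun x : ℝ => Complex.exp (-(I * y * x)) * iteratedDeriv n ψ x) s := by
    intro n s hs
    exact hs.bdd_mul hexpC.aestronglyMeasurable.restrict
      (ae_of_all _ fun x => le_of_eq (norm_exp_Iyx_aux y x))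
  -- splitting the punctured-line integral
  have hsplit : ∀ f : ℝ → ℂ, IntegrableOn f (Iio (0:ℝ)) → IntegrableOn f (Ioi (0:ℝ)) →
      (∫ x in ({(0:ℝ)}ᶜ : Set ℝ), f x) = (∫ x in Iio (0:ℝ), f x) + ∫ x in Ioi (0:ℝ), f x := by
    intro f h1 h2
    rw [show ({(0:ℝ)}ᶜ : Set ℝ) = Iio 0 ∪ Ioi 0 from (Set.Iio_union_Ioi).symm]
    exact setIntegral_union ((Set.Iic_disjoint_Ioi le_rfl).mono_left Set.Iio_subset_Iic_self) measurableSet_Ioi h1 h2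
  -- the basic integration-by-parts identity
  have key : ∀ n : ℕ,
      I * y * (∫ x in ({(0:ℝ)}ᶜ : Set ℝ), Complex.exp (-(I * y * x)) * iteratedDeriv n ψ x) =
        (R n - L n) +
          ∫ x in ({(0:ℝ)}ᶜ : Set ℝ), Complex.exp (-(I * y * x)) * iteratedDeriv (n+1) ψ x := by
    intro n
    have hd : ∀ x : ℝ, x ≠ 0 →
        HasDerivAt (iteratedDeriv n ψ) (iteratedDeriv (n+1) ψ x) x :=
      fun x hx => hasDeriv_iter_aux hsm n hx
    obtain ⟨C1, hC1⟩ := hdec n 1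
    have htop : Tendsto (iteratedDeriv n ψ) atTop (nhds 0) := by
      apply tendsto_atTop_zero_aux C1
      intro x hx
      simpa using hC1 x hx
    have hbot : Tendsto (iteratedDeriv n ψ) atBot (nhds 0) := by
      apply tendsto_atBot_zero_aux C1
      intro x hx
      simpa using hC1 x hx
    have hp := ibp_pos_aux hd (hR n) htop (hEI (n+1) _ (hIpos (n+1))) (hEI n _ (hIpos n))
    have hq := ibp_neg_aux hd (hL n) hbot (hEI (n+1) _ (hIneg (n+1))) (hEI n _ (hIneg n))
    rw [hsplit _ (hEI n _ (hIneg n)) (hEI n _ (hIpos n)),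
      hsplit _ (hEI (n+1) _ (hIneg (n+1))) (hEI (n+1) _ (hIpos (n+1)))]
    linear_combination (-1 : ℂ) * hp - hq
  -- iterate
  have pow_key : ∀ m : ℕ, m ≤ c →
      (I * y) ^ m * (∫ x in ({(0:ℝ)}ᶜ : Set ℝ),
          Complex.exp (-(I * y * x)) * iteratedDeriv 0 ψ x) =
        ∫ x in ({(0:ℝ)}ᶜ : Set ℝ), Complex.exp (-(I * y * x)) * iteratedDeriv m ψ x := by
    intro m
    induction m with
    | zero => intro _; rw [pow_zero, one_mul]
    | succ m ih =>
      intro hm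
      have h1 := ih (le_of_lt (Nat.lt_of_succ_le hm))
      have h2 := key m
      rw [hjump m (Nat.lt_of_succ_le hm), sub_self, zero_add] at h2
      calc (I * ↑y) ^ (m+1) * _ = I * ↑y * ((I * ↑y) ^ m *
              (∫ x in ({(0:ℝ)}ᶜ : Set ℝ),
                Complex.exp (-(I * y * x)) * iteratedDeriv 0 ψ x)) := by ring
        _ = _ := by rw [h1, h2]
  have final : (I * y) ^ (c + 1) * (∫ x in ({(0:ℝ)}ᶜ : Set ℝ),
          Complex.exp (-(I * y * x)) * iteratedDeriv 0 ψ x) =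
        (R c - L c) +
          ∫ x in ({(0:ℝ)}ᶜ : Set ℝ), Complex.exp (-(I * y * x)) * iteratedDeriv (c+1) ψ x := by
    calc (I * ↑y) ^ (c+1) * _ = I * ↑y * ((I * ↑y) ^ c *
            (∫ x in ({(0:ℝ)}ᶜ : Set ℝ),
              Complex.exp (-(I * y * x)) * iteratedDeriv 0 ψ x)) := by ring
      _ = _ := by rw [pow_key c le_rfl, key c]
  -- norms of the integrals
  have hnorm_int : ∀ n : ℕ,
      ‖∫ x in ({(0:ℝ)}ᶜ : Set ℝ), Complex.exp (-(I * y * x)) * iteratedDeriv n ψ x‖ ≤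
        ∫ x in ({(0:ℝ)}ᶜ : Set ℝ), ‖iteratedDeriv n ψ x‖ := by
    intro n
    refine le_trans (norm_integral_le_integral_norm _) (le_of_eq ?_)
    apply integral_congr_ae
    filter_upwards with x
    rw [norm_mul, norm_exp_Iyx_aux, one_mul]
  have hψ0 : (fun x : ℝ => Complex.exp (-(I * y * x)) * iteratedDeriv 0 ψ x) =
      fun x : ℝ => Complex.exp (-(I * y * x)) * ψ x := by
    funext x; rw [iteratedDeriv_zero]
  have hint_nonneg1 : (0:ℝ) ≤ ∫ x in ({(0:ℝ)}ᶜ : Set ℝ), ‖iteratedDeriv (c+1) ψ x‖ :=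
    integral_nonneg (fun x => norm_nonneg _)
  have hψnorm0 : (∫ x in ({(0:ℝ)}ᶜ : Set ℝ), ‖iteratedDeriv 0 ψ x‖) =
      ∫ x in ({(0:ℝ)}ᶜ : Set ℝ), ‖ψ x‖ := by
    apply integral_congr_ae
    filter_upwards with x
    rw [iteratedDeriv_zero]
  constructor
  · -- first bound
    have h := hnorm_int 0
    rw [hψ0, hψnorm0] at h
    have h2 : (0:ℝ) ≤ ‖R c - L c‖ := norm_nonneg _
    linarith
  · -- second bound
    intro hy
    have habs : (0:ℝ) < |y| := abs_pos.mpr hy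
    have hnormIy : ‖(I * (y:ℂ)) ^ (c+1)‖ = |y| ^ (c+1) := by
      rw [norm_pow, norm_mul, Complex.norm_I, one_mul, Complex.norm_real, Real.norm_eq_abs]
    have hzpow : |y| ^ (-(c : ℤ) - 1) = (|y| ^ (c+1))⁻¹ := by
      rw [show (-(c:ℤ) - 1) = -((c+1 : ℕ) : ℤ) by push_cast; ring, zpow_neg, zpow_natCast]
    set J0 : ℂ := ∫ x in ({(0:ℝ)}ᶜ : Set ℝ), Complex.exp (-(I * y * x)) * iteratedDeriv 0 ψ x
      with hJ0
    have hmain : ‖J0‖ * |y| ^ (c+1) ≤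
        ‖R c - L c‖ + ∫ x in ({(0:ℝ)}ᶜ : Set ℝ), ‖iteratedDeriv (c+1) ψ x‖ := by
      have h1 : ‖(I * (y:ℂ)) ^ (c+1) * J0‖ = ‖J0‖ * |y| ^ (c+1) := by
        rw [norm_mul, hnormIy]; ring
      rw [← h1, final]
      refine le_trans (norm_add_le _ _) ?_
      exact add_le_add le_rfl (hnorm_int (c+1))
    have hψint : ‖∫ ξ in ({(0:ℝ)}ᶜ : Set ℝ), Complex.exp (-(I * y * ξ)) * ψ ξ‖ = ‖J0‖ := by
      rw [hJ0, hψ0]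
    rw [hψint, hzpow]
    rw [inv_mul_eq_div, le_div_iff₀ (by positivity)]
    have hψn : (0:ℝ) ≤ ∫ x in ({(0:ℝ)}ᶜ : Set ℝ), ‖ψ x‖ :=
      integral_nonneg (fun x => norm_nonneg _)
    nlinarith [hmain]
end

section
/- Let ψ ∈ S(R^×) with ⟨ψ⟩_0 = ⋯ = ⟨ψ^{(c-1)}⟩_0 = 0 for some integer c ≥ 1. Then for all integers 0 ≤ k ≤ c-1, ∫_R ∫_{R^×} (iy)^k e^{-iyξ} ψ(ξ) dξ dy = 2π ψ^{(k)}(0), where each consecutive integral is absolutely convergent. -/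
open Complex MeasureTheory Set

section Aux

open Filter Topology FourierTransform Real

lemma iteratedDerivWithin_eq_iteratedDeriv_of_isOpen' {f : ℝ → ℂ} {s : Set ℝ} (hs : IsOpen s)
    (n : ℕ) : ∀ x ∈ s, iteratedDerivWithin n f s x = iteratedDeriv n f x := by
  induction n with
  | zero => intro x hx; simp [iteratedDerivWithin_zero, iteratedDeriv_zero]
  | succ n ih =>
    intro x hx
    rw [iteratedDerivWithin_succ, derivWithin_of_isOpen hs hx,
      iteratedDeriv_succ]
    apply Filter.EventuallyEq.deriv_eq
    filter_upwards [hs.mem_nhds hx] with y hy using ih y hy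

lemma hasDerivAt_iteratedDeriv_of_contDiffOn' {f : ℝ → ℂ} {s : Set ℝ} (hs : IsOpen s)
    (h : ContDiffOn ℝ (⊤ : ℕ∞) f s) (n : ℕ) {x : ℝ} (hx : x ∈ s) :
    HasDerivAt (iteratedDeriv n f) (iteratedDeriv (n + 1) f x) x := by
  have hd : DifferentiableWithinAt ℝ (iteratedDerivWithin n f s) s x := by
    refine (h.differentiableOn_iteratedDerivWithin ?_ hs.uniqueDiffOn) x hx
    exact_mod_cast ENat.coe_lt_top n
  have hdA : DifferentiableAt ℝ (iteratedDerivWithin n f s) x :=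
    hd.differentiableAt (hs.mem_nhds hx)
  have heq : iteratedDerivWithin n f s =ᶠ[𝓝 x] iteratedDeriv n f := by
    filter_upwards [hs.mem_nhds hx] with y hy
    exact iteratedDerivWithin_eq_iteratedDeriv_of_isOpen' hs n y hy
  have hdA' : DifferentiableAt ℝ (iteratedDeriv n f) x := hdA.congr_of_eventuallyEq heq.symm
  rw [iteratedDeriv_succ]
  exact hdA'.hasDerivAt

lemma contOn_right' (g : ℝ → ℂ) (Rv : ℂ) (hg : ContinuousOn g ({(0:ℝ)}ᶜ))
    (hR : Tendsto g (𝓝[>] 0) (𝓝 Rv)) :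
    ContinuousOn (fun x => if 0 < x then g x else Rv) (Ici 0) := by
  intro x hx
  rcases eq_or_lt_of_le (mem_Ici.mp hx : (0:ℝ) ≤ x) with rfl | hpos
  · rw [← continuousWithinAt_Ioi_iff_Ici]
    have h0 : (if (0:ℝ) < (0:ℝ) then g 0 else Rv) = Rv := by simp
    show Tendsto _ _ (𝓝 (if (0:ℝ) < (0:ℝ) then g 0 else Rv))
    rw [h0]
    refine hR.congr' ?_
    filter_upwards [self_mem_nhdsWithin] with t ht
    exact (if_pos (mem_Ioi.mp ht)).symm
  · have : ContinuousAt (fun x => if 0 < x then g x else Rv) x := by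
      have hev : (fun x => if 0 < x then g x else Rv) =ᶠ[𝓝 x] g := by
        filter_upwards [Ioi_mem_nhds hpos] with t ht
        exact if_pos (mem_Ioi.mp ht)
      have : ContinuousAt g x :=
        (hg x (by simp [ne_of_gt hpos])).continuousAt
          ((isOpen_compl_singleton).mem_nhds (by simp [ne_of_gt hpos]))
      exact this.congr hev.symm
    exact this.continuousWithinAt

lemma contOn_left' (g : ℝ → ℂ) (Lv : ℂ) (hg : ContinuousOn g ({(0:ℝ)}ᶜ))
    (hL : Tendsto g (𝓝[<] 0) (𝓝 Lv)) :
    ContinuousOn (fun x => if x < 0 then g x else Lv) (Iic 0) := by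
  intro x hx
  rcases (mem_Iic.mp hx).eq_or_lt with rfl | hneg
  · rw [← continuousWithinAt_Iio_iff_Iic]
    have h0 : (if (0:ℝ) < (0:ℝ) then g 0 else Lv) = Lv := by simp
    show Tendsto _ _ (𝓝 (if (0:ℝ) < (0:ℝ) then g 0 else Lv))
    rw [h0]
    refine hL.congr' ?_
    filter_upwards [self_mem_nhdsWithin] with t ht
    exact (if_pos (mem_Iio.mp ht)).symm
  · have : ContinuousAt (fun x => if x < 0 then g x else Lv) x := by
      have hev : (fun x => if x < 0 then g x else Lv) =ᶠ[𝓝 x] g := by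
        filter_upwards [Iio_mem_nhds hneg] with t ht
        exact if_pos (mem_Iio.mp ht)
      have : ContinuousAt g x :=
        (hg x (by simp [ne_of_lt hneg])).continuousAt
          ((isOpen_compl_singleton).mem_nhds (by simp [ne_of_lt hneg]))
      exact this.congr hev.symm
    exact this.continuousWithinAt

lemma integrable_of_pieces' (f : ℝ → ℂ) (hc : ContinuousOn f ({(0:ℝ)}ᶜ))
    (Rv Lv : ℂ) (hR : Tendsto f (𝓝[>] 0) (𝓝 Rv)) (hL : Tendsto f (𝓝[<] 0) (𝓝 Lv))
    (C : ℝ) (hC : ∀ x : ℝ, 1 ≤ |x| → ‖f x‖ ≤ C / x ^ 2) : Integrable f := by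
  have h1 : IntegrableOn f (Ioc 0 1) := by
    have hI : IntegrableOn (fun x => if 0 < x then f x else Rv) (Icc 0 1) :=
      ((contOn_right' f Rv hc hR).mono Icc_subset_Ici_self).integrableOn_Icc
    refine IntegrableOn.congr_fun (hI.mono_set Ioc_subset_Icc_self) ?_ measurableSet_Ioc
    intro x hx
    exact if_pos hx.1
  have h2 : IntegrableOn f (Ico (-1) 0) := by
    have hI : IntegrableOn (fun x => if x < 0 then f x else Lv) (Icc (-1) 0) :=
      ((contOn_left' f Lv hc hL).mono Icc_subset_Iic_self).integrableOn_Icc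
    refine IntegrableOn.congr_fun (hI.mono_set Ico_subset_Icc_self) ?_ measurableSet_Ico
    intro x hx
    exact if_pos hx.2
  have hms : MeasurableSet (Iic (-1:ℝ) ∪ Ici (1:ℝ)) := measurableSet_Iic.union measurableSet_Ici
  have hsub : (Iic (-1:ℝ) ∪ Ici (1:ℝ)) ⊆ {(0:ℝ)}ᶜ := by
    intro x hx
    rcases hx with hx | hx
    · simp only [mem_compl_iff, mem_singleton_iff]; intro h; rw [h] at hx; norm_num at hx
    · simp only [mem_compl_iff, mem_singleton_iff]; intro h; rw [h] at hx; norm_num at hx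
  have habs : ∀ x ∈ (Iic (-1:ℝ) ∪ Ici (1:ℝ)), 1 ≤ |x| := by
    intro x hx
    rcases hx with hx | hx
    · rw [_root_.abs_of_nonpos (by linarith [mem_Iic.mp hx])]; linarith [mem_Iic.mp hx]
    · rw [_root_.abs_of_nonneg (by linarith [mem_Ici.mp hx])]; exact hx
  have h3 : IntegrableOn f (Iic (-1) ∪ Ici 1) := by
    have hCnn : 0 ≤ C := by
      have := hC 1 (by norm_num)
      have := norm_nonneg (f 1)
      nlinarith
    refine Integrable.mono' (g := fun x => (2*C) * (1 + x^2)⁻¹)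
      (((integrable_inv_one_add_sq).const_mul (2*C)).integrableOn)
      ((hc.mono hsub).aestronglyMeasurable hms) ?_
    refine (ae_restrict_iff' hms).mpr (ae_of_all _ fun x hx => ?_)
    have h1x : 1 ≤ |x| := habs x hx
    have hx2 : (1:ℝ) ≤ x^2 := by nlinarith [_root_.sq_abs x]
    refine le_trans (hC x h1x) ?_
    show C / x ^ 2 ≤ 2 * C * (1 + x ^ 2)⁻¹
    have hxpos : (0:ℝ) < x ^ 2 := by nlinarith
    have hpos : (0:ℝ) < 1 + x ^ 2 := by nlinarith
    rw [div_le_iff₀ hxpos]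
    have hkey : C * (1 + x ^ 2) ≤ 2 * C * x ^ 2 * 1 := by nlinarith
    calc C = C * (1 + x ^ 2) * (1 + x ^ 2)⁻¹ := by
            rw [mul_assoc, mul_inv_cancel₀ hpos.ne', mul_one]
      _ ≤ (2 * C * x ^ 2 * 1) * (1 + x ^ 2)⁻¹ :=
            mul_le_mul_of_nonneg_right hkey (inv_nonneg.mpr hpos.le)
      _ = 2 * C * (1 + x ^ 2)⁻¹ * x ^ 2 := by ring
  have h0 : IntegrableOn f ({0} : Set ℝ) := by
    rw [IntegrableOn, Measure.restrict_eq_zero.mpr Real.volume_singleton]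
    exact integrable_zero_measure
  have huniv : (univ : Set ℝ) ⊆ ((Iic (-1) ∪ Ici 1) ∪ (Ico (-1) 0 ∪ Ioc 0 1)) ∪ {0} := by
    intro x _
    by_cases hx0 : x = 0
    · exact Or.inr (by simp [hx0])
    rcases lt_trichotomy x 0 with h | h | h
    · rcases le_or_gt x (-1) with h' | h'
      · exact Or.inl (Or.inl (Or.inl h'))
      · exact Or.inl (Or.inr (Or.inl ⟨le_of_lt h', h⟩))
    · exact absurd h hx0
    · rcases le_or_gt x 1 with h' | h'
      · exact Or.inl (Or.inr (Or.inr ⟨h, h'⟩))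
      · exact Or.inl (Or.inl (Or.inr (le_of_lt h')))
  rw [← integrableOn_univ]
  exact (((h3.union (h2.union h1)).union h0).mono_set huniv)

lemma norm_kernel' (y ξ : ℝ) : ‖Complex.exp (-(I * y * ξ))‖ = 1 := by
  have h : -(I * (y:ℂ) * (ξ:ℂ)) = ((-(y*ξ) : ℝ) : ℂ) * I := by push_cast; ring
  rw [h, Complex.norm_exp_ofReal_mul_I]

lemma kernel_continuous' (y : ℝ) : Continuous (fun ξ : ℝ => Complex.exp (-(I * y * ξ))) :=
  Complex.continuous_exp.comp ((continuous_const.mul Complex.continuous_ofReal).neg)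

lemma kernel_mul_integrable' (y : ℝ) {f : ℝ → ℂ} (hf : Integrable f) :
    Integrable (fun ξ : ℝ => Complex.exp (-(I * y * ξ)) * f ξ) :=
  hf.bdd_mul (c := 1) (kernel_continuous' y).aestronglyMeasurable (ae_of_all _ fun ξ => le_of_eq (norm_kernel' y ξ))

lemma kernel_hasDerivAt' (y ξ : ℝ) :
    HasDerivAt (fun t : ℝ => Complex.exp (-(I * y * t)))
      (-(I*y) * Complex.exp (-(I * y * ξ))) ξ := by
  have h1 : HasDerivAt (fun t : ℝ => -(I * (y:ℂ) * (t:ℂ))) (-(I*y)) ξ := by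
    have h0 : HasDerivAt (fun t : ℝ => (t:ℂ)) 1 ξ := by
      exact (hasDerivAt_id ξ).ofReal_comp
    have h2 := (h0.const_mul (I*(y:ℂ))).neg; rw [mul_one] at h2; exact h2
  simpa [mul_comm] using h1.cexp

lemma ibp_combined' (ψ : ℝ → ℂ) (n : ℕ) (y : ℝ) (Rv Lv : ℂ)
    (hder : ∀ x : ℝ, x ≠ 0 → HasDerivAt (iteratedDeriv n ψ) (iteratedDeriv (n+1) ψ x) x)
    (hcont : ContinuousOn (iteratedDeriv n ψ) ({(0:ℝ)}ᶜ))
    (hR : Tendsto (iteratedDeriv n ψ) (𝓝[>] 0) (𝓝 Rv))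
    (hL : Tendsto (iteratedDeriv n ψ) (𝓝[<] 0) (𝓝 Lv))
    (C : ℝ) (hdecay : ∀ x : ℝ, 1 ≤ |x| → ‖iteratedDeriv n ψ x‖ ≤ C / |x|)
    (hint : Integrable (iteratedDeriv n ψ)) (hint' : Integrable (iteratedDeriv (n+1) ψ)) :
    (∫ ξ : ℝ, (Complex.exp (-(I*y*ξ)) * iteratedDeriv (n+1) ψ ξ
      - I*y*(Complex.exp (-(I*y*ξ)) * iteratedDeriv n ψ ξ))) = Lv - Rv := by
  set F' : ℝ → ℂ := fun ξ => Complex.exp (-(I*y*ξ)) * iteratedDeriv (n+1) ψ ξ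
      - I*y*(Complex.exp (-(I*y*ξ)) * iteratedDeriv n ψ ξ) with hF'
  have hF'int : Integrable F' :=
    (kernel_mul_integrable' y hint').sub ((kernel_mul_integrable' y hint).const_mul (I*y))
  have hprod : ∀ x : ℝ, x ≠ 0 →
      HasDerivAt (fun t : ℝ => Complex.exp (-(I*y*t)) * iteratedDeriv n ψ t) (F' x) x := by
    intro x hx
    have h : HasDerivAt (fun t : ℝ => Complex.exp (-(I*y*t)) * iteratedDeriv n ψ t) _ x :=
      (kernel_hasDerivAt' y x).mul (hder x hx)
    convert h using 1
    simp only [hF']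
    ring
  have hright : (∫ ξ in Ioi (0:ℝ), F' ξ) = -Rv := by
    set G : ℝ → ℂ := fun t => Complex.exp (-(I*y*t)) * (if 0 < t then iteratedDeriv n ψ t else Rv)
      with hG
    have hGF : ∀ t : ℝ, 0 < t → G t = Complex.exp (-(I*y*t)) * iteratedDeriv n ψ t := by
      intro t ht; simp only [hG, if_pos ht]
    have hcw : ContinuousWithinAt G (Ici 0) 0 :=
      ((kernel_continuous' y).continuousWithinAt).mul ((contOn_right' _ Rv hcont hR) 0 self_mem_Ici)
    have hderG : ∀ x ∈ Ioi (0:ℝ), HasDerivAt G (F' x) x := by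
      intro x hx
      refine (hprod x (ne_of_gt hx)).congr_of_eventuallyEq ?_
      filter_upwards [Ioi_mem_nhds hx] with t ht
      exact hGF t ht
    have htend : Tendsto G atTop (𝓝 0) := by
      apply squeeze_zero_norm' (a := fun t : ℝ => C / t)
      · filter_upwards [eventually_ge_atTop (1:ℝ)] with t ht
        have h1 : ‖G t‖ = ‖iteratedDeriv n ψ t‖ := by
          rw [hGF t (by linarith), norm_mul, norm_kernel', one_mul]
        rw [h1]
        have := hdecay t (by rw [_root_.abs_of_nonneg (by linarith)]; exact ht)
        rwa [_root_.abs_of_nonneg (by linarith)] at this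
      · exact tendsto_const_nhds.div_atTop tendsto_id
    have := integral_Ioi_of_hasDerivAt_of_tendsto hcw hderG hF'int.integrableOn htend
    rw [this]
    simp [hG]
  have hleft : (∫ ξ in Iic (0:ℝ), F' ξ) = Lv := by
    set G : ℝ → ℂ := fun t => Complex.exp (-(I*y*t)) * (if t < 0 then iteratedDeriv n ψ t else Lv)
      with hG
    have hGF : ∀ t : ℝ, t < 0 → G t = Complex.exp (-(I*y*t)) * iteratedDeriv n ψ t := by
      intro t ht; simp only [hG, if_pos ht]
    have hcw : ContinuousWithinAt G (Iic 0) 0 :=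
      ((kernel_continuous' y).continuousWithinAt).mul ((contOn_left' _ Lv hcont hL) 0 self_mem_Iic)
    have hderG : ∀ x ∈ Iio (0:ℝ), HasDerivAt G (F' x) x := by
      intro x hx
      refine (hprod x (ne_of_lt hx)).congr_of_eventuallyEq ?_
      filter_upwards [Iio_mem_nhds hx] with t ht
      exact hGF t ht
    have htend : Tendsto G atBot (𝓝 0) := by
      apply squeeze_zero_norm' (a := fun t : ℝ => C / (-t))
      · filter_upwards [eventually_le_atBot (-1:ℝ)] with t ht
        have h1 : ‖G t‖ = ‖iteratedDeriv n ψ t‖ := by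
          rw [hGF t (by linarith), norm_mul, norm_kernel', one_mul]
        rw [h1]
        have := hdecay t (by rw [_root_.abs_of_nonpos (by linarith)]; linarith)
        rwa [_root_.abs_of_nonpos (by linarith)] at this
      · exact tendsto_const_nhds.div_atTop tendsto_neg_atBot_atTop
    have := integral_Iic_of_hasDerivAt_of_tendsto hcw hderG hF'int.integrableOn htend
    rw [this]
    simp [hG]
  rw [← intervalIntegral.integral_Iic_add_Ioi hF'int.integrableOn hF'int.integrableOn,
      hleft, hright]
  ring

end Aux

open Filter Topology FourierTransform Real in
/-- Let `ψ ∈ S(ℝ^×)` with one-sided limits `R n`, `L n` of all derivatives at `0`, and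
suppose the jumps `⟨ψ^{(j)}⟩₀` vanish for `j < c`, where `c ≥ 1`.  Then for all
`0 ≤ k ≤ c - 1`:
`∫_ℝ ∫_{ℝ∖{0}} (iy)^k e^{-iyξ} ψ(ξ) dξ dy = 2π ψ^{(k)}(0)`,
each consecutive integral being absolutely convergent. -/
theorem stmt_11 (ψ : ℝ → ℂ) (hψ : SchwartzOnPunctured ψ) (c : ℕ) (hc : 1 ≤ c)
    (R L : ℕ → ℂ)
    (hR : ∀ n, Filter.Tendsto (iteratedDeriv n ψ) (nhdsWithin 0 (Set.Ioi 0)) (nhds (R n)))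
    (hL : ∀ n, Filter.Tendsto (iteratedDeriv n ψ) (nhdsWithin 0 (Set.Iio 0)) (nhds (L n)))
    (hjump : ∀ j < c, R j = L j) :
    ∀ k < c,
      (∀ y : ℝ, IntegrableOn
          (fun ξ : ℝ => (I * y) ^ k * Complex.exp (-(I * y * ξ)) * ψ ξ) ({(0 : ℝ)}ᶜ)) ∧
      Integrable (fun y : ℝ =>
        ∫ ξ in {(0 : ℝ)}ᶜ, (I * y) ^ k * Complex.exp (-(I * y * ξ)) * ψ ξ) ∧
      (∫ y : ℝ, ∫ ξ in {(0 : ℝ)}ᶜ, (I * y) ^ k * Complex.exp (-(I * y * ξ)) * ψ ξ) =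
        2 * (Real.pi : ℂ) * R k := by
  obtain ⟨hsm, hdecay⟩ := hψ
  have hopen : IsOpen ({(0:ℝ)}ᶜ) := isOpen_compl_singleton
  have hder : ∀ (n : ℕ) (x : ℝ), x ≠ 0 →
      HasDerivAt (iteratedDeriv n ψ) (iteratedDeriv (n+1) ψ x) x := fun n x hx =>
    hasDerivAt_iteratedDeriv_of_contDiffOn' hopen hsm n (by simpa using hx)
  have hcont : ∀ n, ContinuousOn (iteratedDeriv n ψ) ({(0:ℝ)}ᶜ) := fun n x hx =>
    ((hder n x (by simpa using hx)).differentiableAt.continuousAt).continuousWithinAt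
  have hdec2 : ∀ n, ∃ C, ∀ x : ℝ, 1 ≤ |x| → ‖iteratedDeriv n ψ x‖ ≤ C / x ^ 2 := by
    intro n
    obtain ⟨C, hC⟩ := hdecay n 2
    refine ⟨C, fun x hx => ?_⟩
    have h2 := hC x hx
    rw [_root_.sq_abs] at h2
    have hx2 : (0:ℝ) < x ^ 2 := by nlinarith [_root_.sq_abs x]
    rw [le_div_iff₀ hx2]
    linarith [h2, mul_comm (x^2) ‖iteratedDeriv n ψ x‖]
  have hdec1 : ∀ n, ∃ C, ∀ x : ℝ, 1 ≤ |x| → ‖iteratedDeriv n ψ x‖ ≤ C / |x| := by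
    intro n
    obtain ⟨C, hC⟩ := hdecay n 1
    refine ⟨C, fun x hx => ?_⟩
    have h2 := hC x hx
    rw [pow_one] at h2
    have hxpos : (0:ℝ) < |x| := by linarith
    rw [le_div_iff₀ hxpos]
    linarith [mul_comm |x| ‖iteratedDeriv n ψ x‖]
  have hint : ∀ n, Integrable (iteratedDeriv n ψ) := by
    intro n
    obtain ⟨C, hC⟩ := hdec2 n
    exact integrable_of_pieces' _ (hcont n) (R n) (L n) (hR n) (hL n) C hC
  set A : ℕ → ℝ → ℂ := fun n y => ∫ ξ : ℝ, Complex.exp (-(I*y*ξ)) * iteratedDeriv n ψ ξ with hA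
  have hrec : ∀ (n : ℕ) (y : ℝ), A (n+1) y - I*y*A n y = L n - R n := by
    intro n y
    obtain ⟨C, hC⟩ := hdec1 n
    have h := ibp_combined' ψ n y (R n) (L n) (fun x hx => hder n x hx) (hcont n)
      (hR n) (hL n) C hC (hint n) (hint (n+1))
    rw [integral_sub (kernel_mul_integrable' y (hint (n+1)))
      ((kernel_mul_integrable' y (hint n)).const_mul (I*y)), integral_const_mul] at h
    exact h
  have hAnorm : ∀ (n : ℕ) (y : ℝ), ‖A n y‖ ≤ ∫ ξ : ℝ, ‖iteratedDeriv n ψ ξ‖ := by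
    intro n y
    refine le_trans (norm_integral_le_integral_norm _) (le_of_eq ?_)
    refine integral_congr_ae (.of_forall fun ξ => ?_)
    show ‖Complex.exp (-(I * y * ξ)) * iteratedDeriv n ψ ξ‖ = ‖iteratedDeriv n ψ ξ‖
    rw [norm_mul, norm_kernel', one_mul]
  have hAfour : ∀ (n : ℕ) (y : ℝ),
      A n y = 𝓕 (iteratedDeriv n ψ) (y / (2*π)) := by
    intro n y
    rw [Real.fourier_real_eq_integral_exp_smul]
    refine integral_congr_ae (.of_forall fun v => ?_)
    simp only [smul_eq_mul]
    congr 2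
    have hπ : (π:ℂ) ≠ 0 := by exact_mod_cast Real.pi_ne_zero
    push_cast
    field_simp
  have hAcont : ∀ n, Continuous (A n) := by
    intro n
    have he : A n = fun y => 𝓕 (iteratedDeriv n ψ) (y / (2*π)) :=
      funext (hAfour n)
    rw [he]
    exact (VectorFourier.fourierIntegral_continuous Real.continuous_fourierChar
      (innerSL ℝ).continuous₂ (hint n)).comp (continuous_id.div_const _)
  intro k hk
  have hAk : ∀ y : ℝ, A k y = (I*(y:ℂ))^k * A 0 y := by
    have key : ∀ j : ℕ, j ≤ k → ∀ y : ℝ, A j y = (I*(y:ℂ))^j * A 0 y := by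
      intro j
      induction j with
      | zero => intro _ y; simp
      | succ j ih =>
        intro hj y
        have hjc : j < c := lt_of_lt_of_le (Nat.lt_of_lt_of_le (Nat.lt_succ_self j) hj) (le_of_lt hk)
        have h0 := hrec j y
        rw [hjump j hjc, sub_self, sub_eq_zero] at h0
        rw [h0, ih (le_trans (Nat.le_succ j) hj) y, pow_succ]
        ring
    exact key k le_rfl
  set N : ℕ → ℝ := fun n => ∫ ξ : ℝ, ‖iteratedDeriv n ψ ξ‖ with hN
  have hN0 : ∀ n, 0 ≤ N n := fun n => integral_nonneg fun ξ => norm_nonneg _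
  have hquad : ∀ y : ℝ, (1 + y^2) * ‖A k y‖ ≤ N k + (N (k+2) + ‖L (k+1) - R (k+1)‖) := by
    intro y
    have h1 : ‖A k y‖ ≤ N k := hAnorm k y
    have h2 : y^2 * ‖A k y‖ ≤ N (k+2) + ‖L (k+1) - R (k+1)‖ := by
      have e1 := hrec (k+1) y
      have e0 := hrec k y
      rw [hjump k hk, sub_self, sub_eq_zero] at e0
      have hsq : (I*(y:ℂ))^2 * A k y = A (k+2) y - (L (k+1) - R (k+1)) := by
        have : A (k+2) y = I*y*A (k+1) y + (L (k+1) - R (k+1)) := by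
          rw [← e1]; ring
        rw [this, e0]; ring
      have hnorm1 : ‖(I*(y:ℂ))^2 * A k y‖ = y^2 * ‖A k y‖ := by
        rw [norm_mul, norm_pow, norm_mul, Complex.norm_I, one_mul, Complex.norm_real,
          Real.norm_eq_abs, _root_.sq_abs]
      calc y^2 * ‖A k y‖ = ‖(I*(y:ℂ))^2 * A k y‖ := hnorm1.symm
        _ = ‖A (k+2) y - (L (k+1) - R (k+1))‖ := by rw [hsq]
        _ ≤ ‖A (k+2) y‖ + ‖L (k+1) - R (k+1)‖ := norm_sub_le _ _
        _ ≤ N (k+2) + ‖L (k+1) - R (k+1)‖ := add_le_add_left (hAnorm _ _) _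
    nlinarith [h1, h2]
  set Ct : ℝ := N k + (N (k+2) + ‖L (k+1) - R (k+1)‖) with hCt
  have hbA : ∀ y : ℝ, ‖A k y‖ ≤ Ct * (1 + y^2)⁻¹ := by
    intro y
    have hpos : (0:ℝ) < 1 + y^2 := by positivity
    rw [mul_comm, ← div_eq_inv_mul, le_div_iff₀ hpos]
    calc ‖A k y‖ * (1 + y^2) = (1 + y^2) * ‖A k y‖ := by ring
      _ ≤ Ct := hquad y
  have hAint : Integrable (A k) :=
    Integrable.mono' ((integrable_inv_one_add_sq).const_mul Ct)
      (hAcont k).aestronglyMeasurable (ae_of_all _ hbA)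
  -- the continuous modification of the k-th derivative at 0
  set fstar : ℝ → ℂ := fun x => if x = 0 then R k else iteratedDeriv k ψ x with hfstar
  have haeeq : iteratedDeriv k ψ =ᵐ[volume] fstar := by
    refine (MeasureTheory.ae_iff).mpr ?_
    refine measure_mono_null (t := {(0:ℝ)}) (fun x hx => ?_) Real.volume_singleton
    simp only [mem_setOf_eq] at hx
    by_contra hx0
    exact hx (by rw [hfstar]; simp only [if_neg (by simpa using hx0)])
  have hfsint : Integrable fstar := (hint k).congr haeeq
  have hFeq : ∀ w : ℝ, 𝓕 fstar w
      = 𝓕 (iteratedDeriv k ψ) w := by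
    intro w
    rw [Real.fourier_real_eq, Real.fourier_real_eq]
    exact integral_congr_ae ((haeeq.symm).mono fun x hx => by simp only [hx])
  have hAfs : ∀ y : ℝ, A k y = 𝓕 fstar (y / (2*π)) := fun y => by
    rw [hAfour k y, ← hFeq]
  have hFf : ∀ w : ℝ, 𝓕 fstar w = A k (2*π*w) := by
    intro w
    rw [hAfs (2*π*w)]
    congr 1
    field_simp
  have hFfint : Integrable (𝓕 fstar) := by
    refine Integrable.mono' ((integrable_inv_one_add_sq).const_mul Ct)
      ((VectorFourier.fourierIntegral_continuous Real.continuous_fourierChar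
        (innerSL ℝ).continuous₂ hfsint).aestronglyMeasurable) (ae_of_all _ fun w => ?_)
    rw [hFf w]
    refine le_trans (hbA (2*π*w)) ?_
    have hCtnn : 0 ≤ Ct := le_trans (norm_nonneg (A k 0)) (by
      have := hbA 0
      calc ‖A k 0‖ ≤ Ct * (1 + (0:ℝ)^2)⁻¹ := this
        _ = Ct := by norm_num)
    refine mul_le_mul_of_nonneg_left ?_ hCtnn
    have h1 : (1:ℝ) + w^2 ≤ 1 + (2*π*w)^2 := by
      nlinarith [mul_nonneg (by nlinarith [Real.pi_gt_three] : (0:ℝ) ≤ 4*π^2 - 1) (sq_nonneg w)]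
    exact inv_anti₀ (by positivity) h1
  have hcA : ContinuousAt fstar 0 := by
    rw [continuousAt_iff_continuous_left'_right']
    have hf0 : fstar 0 = R k := by rw [hfstar]; simp
    constructor
    · show Tendsto fstar (𝓝[<] 0) (𝓝 (fstar 0))
      rw [hf0, hjump k hk]
      refine (hL k).congr' ?_
      filter_upwards [self_mem_nhdsWithin] with t ht
      rw [hfstar]; simp only [if_neg (ne_of_lt (mem_Iio.mp ht))]
    · show Tendsto fstar (𝓝[>] 0) (𝓝 (fstar 0))
      rw [hf0]
      refine (hR k).congr' ?_
      filter_upwards [self_mem_nhdsWithin] with t ht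
      rw [hfstar]; simp only [if_neg (ne_of_gt (mem_Ioi.mp ht))]
  have hinv : (∫ w : ℝ, 𝓕 fstar w) = R k := by
    have h1 := hfsint.fourierInv_fourier_eq hFfint hcA
    have h2 : 𝓕⁻ (𝓕 fstar) 0
        = ∫ w : ℝ, 𝓕 fstar w := by
      rw [Real.fourierInv_eq]
      simp
    rw [← h2, h1, hfstar]
    simp
  have hfin : (∫ y : ℝ, A k y) = 2 * (π:ℂ) * R k := by
    have h2 : (fun y : ℝ => A k y) = fun y : ℝ => 𝓕 fstar ((2*π)⁻¹ * y) := by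
      funext y
      rw [hAfs y]
      congr 1
      rw [inv_mul_eq_div]
    rw [h2, Measure.integral_comp_mul_left (𝓕 fstar) ((2*π)⁻¹), hinv]
    have : |((2*π:ℝ))⁻¹⁻¹| = 2*π := by
      rw [inv_inv]
      exact abs_of_pos (by positivity)
    rw [this, Complex.real_smul]
    push_cast
    ring
  -- tie to the goal
  have hset : ∀ g : ℝ → ℂ, (∫ ξ in ({(0:ℝ)}ᶜ), g ξ) = ∫ ξ : ℝ, g ξ := by
    intro g
    rw [Measure.restrict_congr_set (t := univ) ?_, Measure.restrict_univ]
    rw [ae_eq_univ]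
    simp
  have hint0 : Integrable ψ := by
    have := hint 0
    rwa [iteratedDeriv_zero] at this
  have hinner : ∀ y : ℝ,
      (∫ ξ in ({(0:ℝ)}ᶜ), (I * (y:ℂ)) ^ k * Complex.exp (-(I * y * ξ)) * ψ ξ) = A k y := by
    intro y
    rw [hset]
    have he : ∀ ξ : ℝ, (I * (y:ℂ)) ^ k * Complex.exp (-(I * y * ξ)) * ψ ξ
        = (I*(y:ℂ))^k * (Complex.exp (-(I * y * ξ)) * iteratedDeriv 0 ψ ξ) := by
      intro ξ
      rw [iteratedDeriv_zero]
      ring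
    rw [integral_congr_ae (.of_forall he), integral_const_mul, ← hAk y]
  refine ⟨?_, ?_, ?_⟩
  · intro y
    have h1 : Integrable (fun ξ : ℝ =>
        (I*(y:ℂ))^k * (Complex.exp (-(I*y*ξ)) * iteratedDeriv 0 ψ ξ)) :=
      (kernel_mul_integrable' y (hint 0)).const_mul _
    have h2 : Integrable (fun ξ : ℝ => (I * (y:ℂ)) ^ k * Complex.exp (-(I * y * ξ)) * ψ ξ) := by
      refine h1.congr (ae_of_all _ fun ξ => ?_)
      rw [iteratedDeriv_zero]
      ring
    exact h2.integrableOn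
  · exact hAint.congr (ae_of_all _ fun y => (hinner y).symm)
  · rw [integral_congr_ae (.of_forall hinner), hfin]
end
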